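/- arXiv:0707.0698 — 2 statements merged into one kernel-verified Lean document; each statement's English description precedes it below -/
import Mathlib

section
/- For an ideal I of 𝕂̃ the following are equivalent: (1) I is idempotent, i.e., I² = I; (2) I is radical, i.e., for all x ∈ 𝕂̃, x² ∈ I implies x ∈ I; (3) for every x ∈ I, the class of the net (√|x_ε|)_ε (for any representative (x_ε)_ε of x) belongs to I; (4) I is an intersection of prime ideals of 𝕂̃. -/
noncomputable section

set_option maxHeartbeats 1000000
set_option synthInstance.maxHeartbeats 400000

open scoped Classical

/-- The index set `(0,1) ⊆ ℝ` of the nets. -/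
abbrev Eps : Type := Set.Ioo (0:ℝ) 1

variable (K : Type) [RCLike K]

/-- A net `(x_ε)_{ε ∈ (0,1)}` is moderate if `|x_ε| ≤ ε^a` for some `a ∈ ℝ`,
for all sufficiently small `ε`. -/
def IsModerate (x : Eps → K) : Prop :=
  ∃ a : ℝ, ∃ ε₀ ∈ Set.Ioo (0:ℝ) 1, ∀ ε : Eps, (ε : ℝ) ≤ ε₀ → ‖x ε‖ ≤ (ε : ℝ) ^ a

/-- A net `(x_ε)_{ε ∈ (0,1)}` is negligible if for every `a ∈ ℝ`, `|x_ε| ≤ ε^a`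
for all sufficiently small `ε`. -/
def IsNegligible (x : Eps → K) : Prop :=
  ∀ a : ℝ, ∃ ε₀ ∈ Set.Ioo (0:ℝ) 1, ∀ ε : Eps, (ε : ℝ) ≤ ε₀ → ‖x ε‖ ≤ (ε : ℝ) ^ a

theorem rpow_two_bound {ε : ℝ} (h0 : 0 < ε) (h2 : ε ≤ 1/2) (a b : ℝ) :
    ε ^ a + ε ^ b ≤ ε ^ (min a b - 1) := by
  have h1 : ε ≤ 1 := h2.trans (by norm_num)
  have ha : ε ^ a ≤ ε ^ min a b :=
    Real.rpow_le_rpow_of_exponent_ge h0 h1 (min_le_left a b)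
  have hb : ε ^ b ≤ ε ^ min a b :=
    Real.rpow_le_rpow_of_exponent_ge h0 h1 (min_le_right a b)
  have key : 2 * ε ^ min a b ≤ ε ^ (min a b - 1) := by
    rw [Real.rpow_sub h0, Real.rpow_one, le_div_iff₀ h0]
    have hx : (0:ℝ) ≤ ε ^ min a b := (Real.rpow_pos_of_pos h0 _).le
    calc 2 * ε ^ min a b * ε ≤ 2 * ε ^ min a b * (1/2) := by
          apply mul_le_mul_of_nonneg_left h2 (by positivity)
      _ = ε ^ min a b := by ring
  calc ε ^ a + ε ^ b ≤ 2 * ε ^ min a b := by linarith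
    _ ≤ ε ^ (min a b - 1) := key

/-- The ring of moderate nets, as a subring of `K^{(0,1)}`. -/
def Moderate : Subring (Eps → K) where
  carrier := {x | IsModerate K x}
  zero_mem' := by
    refine ⟨0, 1/2, by constructor <;> norm_num, fun ε _ => ?_⟩
    simp [Real.rpow_zero]
  one_mem' := by
    refine ⟨0, 1/2, by constructor <;> norm_num, fun ε _ => ?_⟩
    simp [Real.rpow_zero]
  add_mem' := by
    rintro x y ⟨a, ε₀, h₀, ha⟩ ⟨b, ε₁, h₁, hb⟩
    refine ⟨min a b - 1, min (min ε₀ ε₁) (1/2), ⟨lt_min (lt_min h₀.1 h₁.1) (by norm_num), ?_⟩,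
      fun ε hε => ?_⟩
    · calc min (min ε₀ ε₁) (1/2) ≤ 1/2 := min_le_right _ _
        _ < 1 := by norm_num
    · have hε₀ : (ε:ℝ) ≤ ε₀ := le_trans hε (le_trans (min_le_left _ _) (min_le_left _ _))
      have hε₁ : (ε:ℝ) ≤ ε₁ := le_trans hε (le_trans (min_le_left _ _) (min_le_right _ _))
      have hε2 : (ε:ℝ) ≤ 1/2 := le_trans hε (min_le_right _ _)
      calc ‖(x + y) ε‖ ≤ ‖x ε‖ + ‖y ε‖ := norm_add_le _ _
        _ ≤ (ε:ℝ) ^ a + (ε:ℝ) ^ b := add_le_add (ha ε hε₀) (hb ε hε₁)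
        _ ≤ (ε:ℝ) ^ (min a b - 1) := rpow_two_bound ε.2.1 hε2 a b
  neg_mem' := by
    rintro x ⟨a, ε₀, h₀, ha⟩
    exact ⟨a, ε₀, h₀, fun ε hε => by simpa using ha ε hε⟩
  mul_mem' := by
    rintro x y ⟨a, ε₀, h₀, ha⟩ ⟨b, ε₁, h₁, hb⟩
    refine ⟨a + b, min ε₀ ε₁, ⟨lt_min h₀.1 h₁.1, lt_of_le_of_lt (min_le_left _ _) h₀.2⟩,
      fun ε hε => ?_⟩
    have hε₀ : (ε:ℝ) ≤ ε₀ := le_trans hε (min_le_left _ _)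
    have hε₁ : (ε:ℝ) ≤ ε₁ := le_trans hε (min_le_right _ _)
    calc ‖(x * y) ε‖ = ‖x ε‖ * ‖y ε‖ := norm_mul _ _
      _ ≤ (ε:ℝ) ^ a * (ε:ℝ) ^ b :=
        mul_le_mul (ha ε hε₀) (hb ε hε₁) (norm_nonneg _) (Real.rpow_pos_of_pos ε.2.1 _).le
      _ = (ε:ℝ) ^ (a + b) := (Real.rpow_add ε.2.1 _ _).symm

theorem mem_moderate {f : Eps → K} (h : IsModerate K f) : f ∈ Moderate K := h

/-- The ideal of negligible nets in the ring of moderate nets. -/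
def Negligible : Ideal (Moderate K) where
  carrier := {x | IsNegligible K (x : Eps → K)}
  zero_mem' := by
    intro a
    refine ⟨1/2, by constructor <;> norm_num, fun ε _ => ?_⟩
    have : (0:ℝ) ≤ (ε:ℝ) ^ a := (Real.rpow_pos_of_pos ε.2.1 _).le
    simpa using this
  add_mem' := by
    intro x y hx hy a
    obtain ⟨ε₀, h₀, ha⟩ := hx (a + 1)
    obtain ⟨ε₁, h₁, hb⟩ := hy (a + 1)
    refine ⟨min (min ε₀ ε₁) (1/2), ⟨lt_min (lt_min h₀.1 h₁.1) (by norm_num), ?_⟩, fun ε hε => ?_⟩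
    · calc min (min ε₀ ε₁) (1/2) ≤ 1/2 := min_le_right _ _
        _ < 1 := by norm_num
    · have hε₀ : (ε:ℝ) ≤ ε₀ := le_trans hε (le_trans (min_le_left _ _) (min_le_left _ _))
      have hε₁ : (ε:ℝ) ≤ ε₁ := le_trans hε (le_trans (min_le_left _ _) (min_le_right _ _))
      have hε2 : (ε:ℝ) ≤ 1/2 := le_trans hε (min_le_right _ _)
      have hbd := rpow_two_bound (ε := (ε:ℝ)) ε.2.1 hε2 (a+1) (a+1)
      simp only [min_self, add_sub_cancel_right] at hbd
      calc ‖((x + y : Moderate K) : Eps → K) ε‖ ≤ ‖(x : Eps → K) ε‖ + ‖(y : Eps → K) ε‖ := by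
            push_cast
            exact norm_add_le _ _
        _ ≤ (ε:ℝ) ^ (a+1) + (ε:ℝ) ^ (a+1) := add_le_add (ha ε hε₀) (hb ε hε₁)
        _ ≤ (ε:ℝ) ^ a := hbd
  smul_mem' := by
    intro c x hx
    show IsNegligible K ((c * x : Moderate K) : Eps → K)
    intro a
    obtain ⟨b, ε₀, h₀, hc⟩ := c.property
    obtain ⟨ε₁, h₁, hxa⟩ := hx (a - b)
    refine ⟨min ε₀ ε₁, ⟨lt_min h₀.1 h₁.1, lt_of_le_of_lt (min_le_left _ _) h₀.2⟩,
      fun ε hε => ?_⟩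
    have hε₀ : (ε:ℝ) ≤ ε₀ := le_trans hε (min_le_left _ _)
    have hε₁ : (ε:ℝ) ≤ ε₁ := le_trans hε (min_le_right _ _)
    calc ‖((c * x : Moderate K) : Eps → K) ε‖ = ‖(c : Eps → K) ε‖ * ‖(x : Eps → K) ε‖ := by
          push_cast
          exact norm_mul _ _
      _ ≤ (ε:ℝ) ^ b * (ε:ℝ) ^ (a - b) :=
        mul_le_mul (hc ε hε₀) (hxa ε hε₁) (norm_nonneg _) (Real.rpow_pos_of_pos ε.2.1 _).le
      _ = (ε:ℝ) ^ a := by rw [← Real.rpow_add ε.2.1]; ring_nf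

/-- The ring of Colombeau generalized numbers: the quotient of the ring of
moderate nets by the ideal of negligible nets. -/
abbrev CGen : Type := Moderate K ⧸ Negligible K

/-- The quotient map. -/
abbrev cmk : Moderate K →+* CGen K := Ideal.Quotient.mk (Negligible K)

/-- A canonical representative of a Colombeau generalized number. -/
def rep (x : CGen K) : Moderate K := (Ideal.Quotient.mk_surjective x).choose

theorem rep_spec (x : CGen K) : cmk K (rep K x) = x :=
  (Ideal.Quotient.mk_surjective x).choose_spec

theorem indicator_moderate (S : Set Eps) :
    IsModerate K (fun ε => if ε ∈ S then (1:K) else 0) := by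
  refine ⟨0, 1/2, by constructor <;> norm_num, fun ε _ => ?_⟩
  rw [Real.rpow_zero]
  by_cases h : ε ∈ S <;> simp [h]

/-- `e_S`: the generalized number given by the characteristic function of `S ⊆ (0,1)`. -/
def eS (S : Set Eps) : CGen K :=
  cmk K ⟨fun ε => if ε ∈ S then (1:K) else 0, mem_moderate K (indicator_moderate K S)⟩

theorem absNet_moderate (f : Moderate K) :
    IsModerate K (fun ε => ((‖(f : Eps → K) ε‖ : ℝ) : K)) := by
  obtain ⟨a, ε₀, h₀, h⟩ := f.property
  refine ⟨a, ε₀, h₀, fun ε hε => ?_⟩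
  simpa [RCLike.norm_ofReal, abs_norm] using h ε hε

/-- `|x|`: the class of the net `(|x_ε|)_ε` (for any representative of `x`). -/
def absC (x : CGen K) : CGen K :=
  cmk K ⟨_, mem_moderate K (absNet_moderate K (rep K x))⟩

theorem minNet_moderate (f g : Moderate K) :
    IsModerate K (fun ε => ((min ‖(f : Eps → K) ε‖ ‖(g : Eps → K) ε‖ : ℝ) : K)) := by
  obtain ⟨a, ε₀, h₀, h⟩ := f.property
  refine ⟨a, ε₀, h₀, fun ε hε => ?_⟩
  rw [RCLike.norm_ofReal, abs_of_nonneg (le_min (norm_nonneg _) (norm_nonneg _))]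
  exact le_trans (min_le_left _ _) (h ε hε)

/-- `|x| ∧ |y|`: the class of the pointwise minimum of `(|x_ε|)_ε` and `(|y_ε|)_ε`. -/
def infAbs (x y : CGen K) : CGen K :=
  cmk K ⟨_, mem_moderate K (minNet_moderate K (rep K x) (rep K y))⟩

theorem sqrtNet_moderate (f : Moderate K) :
    IsModerate K (fun ε => ((Real.sqrt ‖(f : Eps → K) ε‖ : ℝ) : K)) := by
  obtain ⟨a, ε₀, h₀, h⟩ := f.property
  refine ⟨a / 2, ε₀, h₀, fun ε hε => ?_⟩
  rw [RCLike.norm_ofReal, abs_of_nonneg (Real.sqrt_nonneg _)]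
  calc Real.sqrt ‖(f : Eps → K) ε‖ ≤ Real.sqrt ((ε:ℝ) ^ a) := Real.sqrt_le_sqrt (h ε hε)
    _ = (ε:ℝ) ^ (a / 2) := by
        rw [Real.sqrt_eq_rpow, ← Real.rpow_mul ε.2.1.le]
        ring_nf

/-- `√|x|`: the class of the net `(√|x_ε|)_ε` (for any representative of `x`). -/
def sqrtAbs (x : CGen K) : CGen K :=
  cmk K ⟨_, mem_moderate K (sqrtNet_moderate K (rep K x))⟩

/-- The annihilator `Ann(a) = {x : x·a = 0}` as an ideal. -/
def annIdeal (a : CGen K) : Ideal (CGen K) where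
  carrier := {x | x * a = 0}
  zero_mem' := by simp
  add_mem' := by
    intro x y hx hy
    show (x + y) * a = 0
    rw [add_mul, hx, hy, add_zero]
  smul_mem' := by
    intro c x hx
    show c * x * a = 0
    rw [mul_assoc, hx, mul_zero]

/-- The order relation on `𝕂̃`: `x ≤ y` iff there exist (real-valued) representatives
`(u_ε)_ε` of `x` and `(v_ε)_ε` of `y` with `u_ε ≤ v_ε` for all `ε`. -/
def leC (x y : CGen K) : Prop :=
  ∃ u v : Moderate K, cmk K u = x ∧ cmk K v = y ∧
    ∀ ε : Eps, ∃ r s : ℝ, (u : Eps → K) ε = (r : K) ∧ (v : Eps → K) ε = (s : K) ∧ r ≤ s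

/-- A z-ideal: if `b ∈ I` and `a` belongs to exactly the same maximal ideals as `b`,
then `a ∈ I`. -/
def IsZIdeal (I : Ideal (CGen K)) : Prop :=
  ∀ a b : CGen K, b ∈ I →
    (∀ M : Ideal (CGen K), M.IsMaximal → (a ∈ M ↔ b ∈ M)) → a ∈ I

/-!
Divisibility in `𝕂̃` is governed by pointwise size: if `|u_ε| ≤ |w_ε|` for all `ε`, then
`u = (u / w) · w` with `u / w` bounded, so `[w] ∣ [u]`. Hence `x` and `|x|` divide each other,
`√|x| · √|x| = |x|`, `√|·|` is multiplicative, and `√|x| + √|y| ∣ √|x + y|`. So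
`J = {x | √|x| ∈ I}` is an ideal, and it contains every product `ab` with `a, b ∈ I` because
`√|ab| ≤ |a| + |b|`. Thus `I² = I` gives `I ⊆ J`; conversely, if `I ⊆ J` then `x` is divisible
by `√|x| · √|x| ∈ I²`. Closure under `√|·|` is equivalent to being radical by the same
identities, and radical ideals are exactly the intersections of prime ideals.
-/

theorem Real.sqrt_add_le_sqrt_add_sqrt {a b : ℝ} (ha : 0 ≤ a) (hb : 0 ≤ b) :
    √(a + b) ≤ √a + √b := by
  rw [Real.sqrt_le_iff]
  refine ⟨by positivity, ?_⟩
  nlinarith [Real.sq_sqrt ha, Real.sq_sqrt hb, Real.sqrt_nonneg a, Real.sqrt_nonneg b]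

theorem Real.abs_sqrt_sub_sqrt_le {a b : ℝ} (ha : 0 ≤ a) (hb : 0 ≤ b) :
    |√a - √b| ≤ √|a - b| := by
  refine Real.abs_le_sqrt ?_
  have hsum : |√a - √b| ≤ √a + √b := by
    rw [abs_le]; constructor <;> linarith [Real.sqrt_nonneg a, Real.sqrt_nonneg b]
  calc (√a - √b) ^ 2 = |√a - √b| * |√a - √b| := by rw [sq, abs_mul_abs_self]
    _ ≤ |√a - √b| * (√a + √b) := mul_le_mul_of_nonneg_left hsum (abs_nonneg _)
    _ = |(√a - √b) * (√a + √b)| := by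
      rw [abs_mul, abs_of_nonneg (add_nonneg (Real.sqrt_nonneg a) (Real.sqrt_nonneg b))]
    _ = |a - b| := by
      congr 1
      linear_combination Real.sq_sqrt ha - Real.sq_sqrt hb

section

variable {K}

theorem isModerate_of_norm_le_one {x : Eps → K} (h : ∀ ε, ‖x ε‖ ≤ 1) : IsModerate K x :=
  ⟨0, 1 / 2, by norm_num, fun ε _ => by simpa using h ε⟩

namespace Moderate

theorem dvd_of_norm_le {u w : Moderate K}
    (h : ∀ ε, ‖(u : Eps → K) ε‖ ≤ ‖(w : Eps → K) ε‖) : w ∣ u := by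
  refine ⟨⟨fun ε => (u : Eps → K) ε / (w : Eps → K) ε,
    isModerate_of_norm_le_one fun ε => ?_⟩, ?_⟩
  · rw [norm_div]
    exact div_le_one_of_le₀ (h ε) (norm_nonneg _)
  · ext ε
    change (u : Eps → K) ε = (w : Eps → K) ε * ((u : Eps → K) ε / (w : Eps → K) ε)
    rcases eq_or_ne ((w : Eps → K) ε) 0 with hw | hw
    · have := h ε
      rw [hw, norm_zero, norm_le_zero_iff] at this
      rw [this, hw, zero_mul]
    · rw [mul_div_cancel₀ _ hw]

def absMod (f : Moderate K) : Moderate K :=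
  ⟨fun ε => ((‖(f : Eps → K) ε‖ : ℝ) : K), absNet_moderate K f⟩

def sqrtMod (f : Moderate K) : Moderate K :=
  ⟨fun ε => ((√‖(f : Eps → K) ε‖ : ℝ) : K), sqrtNet_moderate K f⟩

@[simp]
theorem norm_absMod_apply (f : Moderate K) (ε : Eps) :
    ‖(absMod f : Eps → K) ε‖ = ‖(f : Eps → K) ε‖ := by
  simp [absMod]

@[simp]
theorem norm_sqrtMod_apply (f : Moderate K) (ε : Eps) :
    ‖(sqrtMod f : Eps → K) ε‖ = √‖(f : Eps → K) ε‖ := by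
  simp [sqrtMod]

theorem absMod_dvd (f : Moderate K) : absMod f ∣ f :=
  dvd_of_norm_le fun ε => (norm_absMod_apply f ε).ge

theorem dvd_absMod (f : Moderate K) : f ∣ absMod f :=
  dvd_of_norm_le fun ε => (norm_absMod_apply f ε).le

theorem sqrtMod_zero : sqrtMod (0 : Moderate K) = 0 := by
  ext ε
  simp [sqrtMod]

theorem sqrtMod_mul (f g : Moderate K) : sqrtMod (f * g) = sqrtMod f * sqrtMod g := by
  ext ε
  simp [sqrtMod, norm_mul, Real.sqrt_mul (norm_nonneg _)]

theorem mul_self_sqrtMod (f : Moderate K) : sqrtMod f * sqrtMod f = absMod f := by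
  ext ε
  simp [sqrtMod, absMod, ← RCLike.ofReal_mul]

theorem sqrtMod_add_sqrtMod_dvd (f g : Moderate K) :
    sqrtMod f + sqrtMod g ∣ sqrtMod (f + g) := by
  refine dvd_of_norm_le fun ε => ?_
  have hf := norm_nonneg ((f : Eps → K) ε)
  have hg := norm_nonneg ((g : Eps → K) ε)
  calc ‖(sqrtMod (f + g) : Eps → K) ε‖ = √‖(f : Eps → K) ε + (g : Eps → K) ε‖ :=
        norm_sqrtMod_apply _ _
    _ ≤ √(‖(f : Eps → K) ε‖ + ‖(g : Eps → K) ε‖) := Real.sqrt_le_sqrt (norm_add_le _ _)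
    _ ≤ √‖(f : Eps → K) ε‖ + √‖(g : Eps → K) ε‖ := Real.sqrt_add_le_sqrt_add_sqrt hf hg
    _ = ‖((sqrtMod f + sqrtMod g : Moderate K) : Eps → K) ε‖ := by
      change _ = ‖((√‖(f : Eps → K) ε‖ : ℝ) : K) + ((√‖(g : Eps → K) ε‖ : ℝ) : K)‖
      rw [← RCLike.ofReal_add, RCLike.norm_of_nonneg (by positivity)]

theorem absMod_add_absMod_dvd_sqrtMod_mul (f g : Moderate K) :
    absMod f + absMod g ∣ sqrtMod (f * g) := by
  refine dvd_of_norm_le fun ε => ?_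
  have hf := norm_nonneg ((f : Eps → K) ε)
  have hg := norm_nonneg ((g : Eps → K) ε)
  -- `√(s t) ≤ max s t ≤ s + t`
  calc ‖(sqrtMod (f * g) : Eps → K) ε‖ = √(‖(f : Eps → K) ε‖ * ‖(g : Eps → K) ε‖) := by
        rw [norm_sqrtMod_apply]; simp [norm_mul]
    _ ≤ ‖(f : Eps → K) ε‖ + ‖(g : Eps → K) ε‖ := by
      rw [Real.sqrt_le_iff]
      exact ⟨add_nonneg hf hg, by nlinarith⟩
    _ = ‖((absMod f + absMod g : Moderate K) : Eps → K) ε‖ := by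
      change _ = ‖((‖(f : Eps → K) ε‖ : ℝ) : K) + ((‖(g : Eps → K) ε‖ : ℝ) : K)‖
      rw [← RCLike.ofReal_add, RCLike.norm_of_nonneg (by positivity)]

theorem sqrtMod_sub_mem_negligible {f g : Moderate K} (h : f - g ∈ Negligible K) :
    sqrtMod f - sqrtMod g ∈ Negligible K := by
  intro a
  obtain ⟨ε₀, hε₀, hfg⟩ := h (2 * a)
  refine ⟨ε₀, hε₀, fun ε hε => ?_⟩
  calc ‖((sqrtMod f - sqrtMod g : Moderate K) : Eps → K) ε‖
      = |√‖(f : Eps → K) ε‖ - √‖(g : Eps → K) ε‖| := by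
        change ‖((√‖(f : Eps → K) ε‖ : ℝ) : K) - ((√‖(g : Eps → K) ε‖ : ℝ) : K)‖ = _
        rw [← RCLike.ofReal_sub, RCLike.norm_ofReal]
    _ ≤ √|‖(f : Eps → K) ε‖ - ‖(g : Eps → K) ε‖| :=
        Real.abs_sqrt_sub_sqrt_le (norm_nonneg _) (norm_nonneg _)
    _ ≤ √‖((f - g : Moderate K) : Eps → K) ε‖ := Real.sqrt_le_sqrt (abs_norm_sub_norm_le _ _)
    _ ≤ √((ε : ℝ) ^ (2 * a)) := Real.sqrt_le_sqrt (hfg ε hε)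
    _ = (ε : ℝ) ^ a := by
      rw [Real.sqrt_eq_rpow, ← Real.rpow_mul ε.2.1.le]
      ring_nf

end Moderate

open Moderate

theorem sqrtAbs_mk (f : Moderate K) : sqrtAbs K (cmk K f) = cmk K (sqrtMod f) :=
  Ideal.Quotient.eq.2 (sqrtMod_sub_mem_negligible (Ideal.Quotient.eq.1 (rep_spec K _)))

theorem sqrtAbs_def (x : CGen K) : sqrtAbs K x = cmk K (sqrtMod (rep K x)) := rfl

theorem absC_def (x : CGen K) : absC K x = cmk K (absMod (rep K x)) := rfl

theorem absC_dvd (x : CGen K) : absC K x ∣ x := by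
  conv_rhs => rw [← rep_spec K x]
  exact map_dvd (cmk K) (absMod_dvd (rep K x))

theorem dvd_absC (x : CGen K) : x ∣ absC K x := by
  conv_lhs => rw [← rep_spec K x]
  exact map_dvd (cmk K) (dvd_absMod (rep K x))

theorem absC_mem {I : Ideal (CGen K)} {x : CGen K} (hx : x ∈ I) : absC K x ∈ I :=
  I.mem_of_dvd (dvd_absC x) hx

theorem mul_self_sqrtAbs (x : CGen K) : sqrtAbs K x * sqrtAbs K x = absC K x := by
  rw [sqrtAbs_def, absC_def, ← map_mul, mul_self_sqrtMod]

theorem sqrtAbs_zero : sqrtAbs K (0 : CGen K) = 0 := by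
  rw [← map_zero (cmk K), sqrtAbs_mk, sqrtMod_zero]

theorem sqrtAbs_mul (x y : CGen K) : sqrtAbs K (x * y) = sqrtAbs K x * sqrtAbs K y := by
  obtain ⟨f, rfl⟩ := Ideal.Quotient.mk_surjective x
  obtain ⟨g, rfl⟩ := Ideal.Quotient.mk_surjective y
  rw [← map_mul, sqrtAbs_mk, sqrtAbs_mk, sqrtAbs_mk, sqrtMod_mul, map_mul]

theorem sqrtAbs_mul_self (x : CGen K) : sqrtAbs K (x * x) = absC K x := by
  rw [sqrtAbs_mul, mul_self_sqrtAbs]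

theorem sqrtAbs_add_sqrtAbs_dvd (x y : CGen K) :
    sqrtAbs K x + sqrtAbs K y ∣ sqrtAbs K (x + y) := by
  obtain ⟨f, rfl⟩ := Ideal.Quotient.mk_surjective x
  obtain ⟨g, rfl⟩ := Ideal.Quotient.mk_surjective y
  rw [← map_add, sqrtAbs_mk, sqrtAbs_mk, sqrtAbs_mk, ← map_add]
  exact map_dvd _ (sqrtMod_add_sqrtMod_dvd f g)

theorem absC_add_absC_dvd_sqrtAbs_mul (x y : CGen K) :
    absC K x + absC K y ∣ sqrtAbs K (x * y) := by
  conv_rhs => rw [← rep_spec K x, ← rep_spec K y, ← map_mul, sqrtAbs_mk]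
  exact map_dvd _ (absMod_add_absMod_dvd_sqrtMod_mul (rep K x) (rep K y))

def sqrtAbsPreimage (I : Ideal (CGen K)) : Ideal (CGen K) where
  carrier := {x | sqrtAbs K x ∈ I}
  zero_mem' := by
    change sqrtAbs K 0 ∈ I
    rw [sqrtAbs_zero]
    exact I.zero_mem
  add_mem' hx hy := I.mem_of_dvd (sqrtAbs_add_sqrtAbs_dvd _ _) (I.add_mem hx hy)
  smul_mem' c x hx := by
    change sqrtAbs K (c * x) ∈ I
    rw [sqrtAbs_mul]
    exact I.mul_mem_left _ hx

theorem mul_le_sqrtAbsPreimage (I : Ideal (CGen K)) : I * I ≤ sqrtAbsPreimage I :=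
  Ideal.mul_le.2 fun a ha b hb =>
    I.mem_of_dvd (absC_add_absC_dvd_sqrtAbs_mul a b) (I.add_mem (absC_mem ha) (absC_mem hb))

end

/-- for an ideal `I` of `𝕂̃`, TFAE: `I² = I`; `I` is radical;
`I` is closed under `x ↦ √|x|`; `I` is an intersection of prime ideals. -/
theorem stmt3 (I : Ideal (CGen K)) :
    List.TFAE [I * I = I,
      ∀ x : CGen K, x * x ∈ I → x ∈ I,
      ∀ x ∈ I, sqrtAbs K x ∈ I,
      ∃ Ps : Set (Ideal (CGen K)), (∀ P ∈ Ps, P.IsPrime) ∧ I = sInf Ps] := by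
  tfae_have 1 → 3 := fun h x hx => mul_le_sqrtAbsPreimage I (h.symm ▸ hx)
  tfae_have 3 → 1 := fun h => le_antisymm Ideal.mul_le_right fun x hx =>
    (I * I).mem_of_dvd (mul_self_sqrtAbs x ▸ absC_dvd x) (Ideal.mul_mem_mul (h x hx) (h x hx))
  tfae_have 2 → 3 := fun h x hx => h _ (mul_self_sqrtAbs x ▸ absC_mem hx)
  tfae_have 3 → 2 := fun h x hx => I.mem_of_dvd (absC_dvd x) (sqrtAbs_mul_self x ▸ h _ hx)
  tfae_have 2 → 4 := fun h => by
    have hI : I.IsRadical :=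
      (Ideal.isRadical_iff_pow_one_lt 2 one_lt_two).2 fun x hx => h x (sq x ▸ hx)
    exact ⟨{P | I ≤ P ∧ P.IsPrime}, fun P hP => hP.2,
      by rw [← Ideal.radical_eq_sInf, hI.radical]⟩
  tfae_have 4 → 2 := by
    rintro ⟨Ps, hPs, rfl⟩ x hx
    rw [Submodule.mem_sInf] at hx ⊢
    exact fun P hP => ((hPs P hP).mem_or_mem (hx P hP)).elim id id
  tfae_finish

end
end

section
/- A proper prime ideal P of 𝕂̃ is a minimal prime ideal (i.e., P contains no strictly smaller prime ideal) if and only if P is pure. -/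
noncomputable section

set_option maxHeartbeats 1000000
set_option synthInstance.maxHeartbeats 400000

open scoped Classical

variable (K : Type) [RCLike K]

/-!
Pure primes are minimal in any commutative ring: if `x = x y` with `y ∈ P`, then `x (1 - y) = 0`
with `1 - y ∉ P`, so `x` lies in every prime below `P`. Conversely, in a reduced ring an element
`x` of a minimal prime `P` has `x s = 0` for some `s ∉ P`. In `𝕂̃` such a relation splits:
with representatives `u`, `v` of `x`, `s` and `S = {ε | ‖u_ε‖ ≤ ‖v_ε‖}`, both `u · 1_S` and
`v · 1_{Sᶜ}` are negligible because `‖u_ε‖² ≤ ‖u_ε v_ε‖` on `S` (and symmetrically on `Sᶜ`).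
Hence `e = e_{Sᶜ}` satisfies `x = x e` and `s e = 0`, so `e ∈ P`.
-/

theorem Ideal.eq_of_le_of_pure {R : Type*} [CommRing R] {P Q : Ideal R} (hP : P ≠ ⊤)
    (hpure : ∀ x ∈ P, ∃ y ∈ P, x = x * y) (hQ : Q.IsPrime) (hQP : Q ≤ P) : Q = P := by
  refine le_antisymm hQP fun x hx => ?_
  obtain ⟨y, hyP, hxy⟩ := hpure x hx
  have h1y : 1 - y ∉ Q := fun h => hP <| (Ideal.eq_top_iff_one P).mpr <| by
    simpa using P.add_mem (hQP h) hyP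
  have hzero : x * (1 - y) = 0 := by rw [mul_sub, mul_one, ← hxy, sub_self]
  exact (hQ.mem_or_mem (hzero ▸ Q.zero_mem)).resolve_right h1y

theorem Ideal.exists_notMem_mul_eq_zero_of_mem_minimalPrimes {R : Type*} [CommRing R]
    [IsReduced R] {P : Ideal R} (hP : P ∈ minimalPrimes R) {x : R} (hx : x ∈ P) :
    ∃ s ∉ P, x * s = 0 := by
  have : P.IsPrime := hP.1.1
  have : Ring.KrullDimLE 0 (Localization.AtPrime P) := .of_isLocalization P hP _
  obtain ⟨n, hn⟩ := Ring.KrullDimLE.isNilpotent_iff_mem_maximalIdeal.mpr <|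
    (IsLocalization.AtPrime.to_map_mem_maximal_iff (Localization.AtPrime P) P x).mpr hx
  rw [← map_pow, IsLocalization.map_eq_zero_iff P.primeCompl] at hn
  obtain ⟨⟨s, hs⟩, hsx⟩ := hn
  refine ⟨s, hs, IsReduced.eq_zero _ ⟨n + 1, ?_⟩⟩
  calc (x * s) ^ (n + 1) = x * s ^ n * (s * x ^ n) := by ring
    _ = 0 := by rw [hsx, mul_zero]

theorem Ideal.pure_of_mem_minimalPrimes {R : Type*} [CommRing R] [IsReduced R]
    (hsplit : ∀ x s : R, x * s = 0 → ∃ e, x = x * e ∧ s * e = 0)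
    {P : Ideal R} (hP : P ∈ minimalPrimes R) : ∀ x ∈ P, ∃ y ∈ P, x = x * y := by
  intro x hx
  obtain ⟨s, hsP, hxs⟩ := Ideal.exists_notMem_mul_eq_zero_of_mem_minimalPrimes hP hx
  obtain ⟨e, hxe, hse⟩ := hsplit x s hxs
  exact ⟨e, (hP.1.1.mem_or_mem (hse ▸ P.zero_mem)).resolve_left hsP, hxe⟩

variable {K}

theorem IsNegligible.of_norm_pow_le {x y : Eps → K} {n : ℕ} (hn : n ≠ 0)
    (hx : IsNegligible K x) (hyx : ∀ ε, ‖y ε‖ ^ n ≤ ‖x ε‖) : IsNegligible K y := by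
  intro a
  obtain ⟨ε₀, hε₀, hxa⟩ := hx (a * n)
  refine ⟨ε₀, hε₀, fun ε hε => ?_⟩
  have hpos : (0 : ℝ) < ε := ε.2.1
  refine (pow_le_pow_iff_left₀ (norm_nonneg _) (Real.rpow_nonneg hpos.le a) hn).mp ?_
  calc ‖y ε‖ ^ n ≤ ‖x ε‖ := hyx ε
    _ ≤ (ε : ℝ) ^ (a * n) := hxa ε hε
    _ = ((ε : ℝ) ^ a) ^ n := Real.rpow_mul_natCast hpos.le a n

theorem cmk_eq_zero_iff (u : Moderate K) : cmk K u = 0 ↔ IsNegligible K u :=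
  Ideal.Quotient.eq_zero_iff_mem

theorem negligible_isRadical : (Negligible K).IsRadical := by
  rintro u ⟨n, hn⟩
  rcases eq_or_ne n 0 with rfl | hn0
  · rw [pow_zero, ← Ideal.eq_top_iff_one] at hn
    exact hn ▸ Submodule.mem_top
  · refine IsNegligible.of_norm_pow_le hn0 hn fun ε => ?_
    rw [← norm_pow]
    rfl

instance : IsReduced (CGen K) :=
  (Ideal.isRadical_iff_quotient_reduced _).mp negligible_isRadical

theorem cmk_mul_eS_eq_zero {u v : Moderate K} (huv : cmk K u * cmk K v = 0) {S : Set Eps}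
    (hS : ∀ ε ∈ S, ‖(u : Eps → K) ε‖ ≤ ‖(v : Eps → K) ε‖) : cmk K u * eS K S = 0 := by
  rw [← map_mul, cmk_eq_zero_iff] at huv
  rw [eS, ← map_mul, cmk_eq_zero_iff]
  refine IsNegligible.of_norm_pow_le two_ne_zero huv fun ε => ?_
  change ‖(u : Eps → K) ε * (if ε ∈ S then 1 else 0)‖ ^ 2
    ≤ ‖(u : Eps → K) ε * (v : Eps → K) ε‖
  split_ifs with hε
  · rw [mul_one, sq, norm_mul]
    exact mul_le_mul_of_nonneg_left (hS ε hε) (norm_nonneg _)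
  · rw [mul_zero, norm_zero, zero_pow two_ne_zero, norm_mul]
    positivity

theorem eS_add_eS_compl (S : Set Eps) : eS K S + eS K Sᶜ = 1 := by
  rw [eS, eS, ← map_add, ← map_one (cmk K)]
  congr 1
  ext ε
  by_cases hε : ε ∈ S <;> simp [hε]

theorem CGen.exists_eq_mul_and_mul_eq_zero (x s : CGen K) (hxs : x * s = 0) :
    ∃ e, x = x * e ∧ s * e = 0 := by
  obtain ⟨u, rfl⟩ := Ideal.Quotient.mk_surjective x
  obtain ⟨v, rfl⟩ := Ideal.Quotient.mk_surjective s
  set S : Set Eps := {ε | ‖(u : Eps → K) ε‖ ≤ ‖(v : Eps → K) ε‖}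
  have hxS : cmk K u * eS K S = 0 := cmk_mul_eS_eq_zero hxs fun ε hε => hε
  have hsS : cmk K v * eS K Sᶜ = 0 :=
    cmk_mul_eS_eq_zero ((mul_comm _ _).trans hxs) fun ε hε => le_of_not_ge hε
  refine ⟨eS K Sᶜ, ?_, hsS⟩
  calc cmk K u = cmk K u * (eS K S + eS K Sᶜ) := by rw [eS_add_eS_compl, mul_one]
    _ = cmk K u * eS K Sᶜ := by rw [mul_add, hxS, zero_add]

variable (K)

/-- a proper prime ideal `P` of `𝕂̃` is a minimal prime iff it is pure. -/
theorem stmt6 (P : Ideal (CGen K)) (hP : P.IsPrime) :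
    (∀ Q : Ideal (CGen K), Q.IsPrime → Q ≤ P → Q = P) ↔
    (∀ x ∈ P, ∃ y ∈ P, x = x * y) := by
  constructor
  · intro hmin
    refine Ideal.pure_of_mem_minimalPrimes CGen.exists_eq_mul_and_mul_eq_zero ?_
    rw [minimalPrimes_eq_minimals]
    exact ⟨hP, fun Q hQ hQP => (hmin Q hQ hQP).ge⟩
  · exact fun hpure Q hQ hQP => Ideal.eq_of_le_of_pure hP.ne_top hpure hQ hQP

end
end
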